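/- arXiv:1801.04189 — 5 statements merged into one kernel-verified Lean document; each statement's English description precedes it below -/
import Mathlib

section
/- Let l ≥ 1 and r ≥ 1 be integers and set q = 2^l. In the polynomial ring F_2[X], with f(X) = Σ_{j=0}^{r-1} X^{q^j} and g(X) = Σ_{j=1}^{r-1} X^{q^j} + Σ_{0 ≤ i < j ≤ r-1} Σ_{s=0}^{l-1} X^{2^s·(q^i + q^j)}, the identity f(X)^{q+1} + f(X) = X^{q^r + 1} + X + g(X)^2 + g(X) holds in F_2[X]. -/
open Polynomial Finset

private lemma two0 : (2 : Polynomial (ZMod 2)) = 0 := by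
  have := CharP.cast_eq_zero (Polynomial (ZMod 2)) 2
  exact_mod_cast this

private lemma tele (n : ℕ) (f : ℕ → Polynomial (ZMod 2)) :
    (∑ s ∈ range n, f (s + 1)) + ∑ s ∈ range n, f s = f n + f 0 := by
  have h : (∑ s ∈ range n, f (s + 1)) - ∑ s ∈ range n, f s = f n - f 0 := by
    rw [← Finset.sum_sub_distrib, Finset.sum_range_sub]
  rw [sub_eq_add_neg, CharTwo.neg_eq, sub_eq_add_neg, CharTwo.neg_eq] at h
  exact h

private lemma telesq (l m : ℕ) :
    (∑ s ∈ range l, (X : Polynomial (ZMod 2)) ^ (2 ^ s * m)) ^ 2 +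
      ∑ s ∈ range l, (X : Polynomial (ZMod 2)) ^ (2 ^ s * m)
    = X ^ (2 ^ l * m) + X ^ m := by
  rw [sum_pow_char 2]
  have h : ∀ s, ((X : Polynomial (ZMod 2)) ^ (2 ^ s * m)) ^ 2 = X ^ (2 ^ (s + 1) * m) := by
    intro s; rw [← pow_mul]; ring
  simp_rw [h]
  simpa using tele l (fun s => (X : Polynomial (ZMod 2)) ^ (2 ^ s * m))

private lemma key (l q : ℕ) (hq : q = 2 ^ l) (r : ℕ) (hr : 1 ≤ r) :
    (∑ j ∈ range r, (X : Polynomial (ZMod 2)) ^ (q ^ j)) ^ (q + 1)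
      + ∑ j ∈ range r, (X : Polynomial (ZMod 2)) ^ (q ^ j)
    = X ^ (q ^ r + 1) + X
      + ((∑ j ∈ Ico 1 r, (X : Polynomial (ZMod 2)) ^ (q ^ j)) +
          ∑ j ∈ range r, ∑ i ∈ range j, ∑ s ∈ range l, X ^ (2 ^ s * (q ^ i + q ^ j))) ^ 2
      + ((∑ j ∈ Ico 1 r, (X : Polynomial (ZMod 2)) ^ (q ^ j)) +
          ∑ j ∈ range r, ∑ i ∈ range j, ∑ s ∈ range l, X ^ (2 ^ s * (q ^ i + q ^ j))) := by
  induction r, hr using Nat.le_induction with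
  | base => simp [pow_one]
  | succ r hr IH =>
    have hsumq : ∀ (n : ℕ) (f : ℕ → Polynomial (ZMod 2)),
        (∑ j ∈ range n, f j) ^ q = ∑ j ∈ range n, (f j) ^ q := by
      subst hq; exact fun n f => sum_pow_char_pow 2 l _ f
    have hfrob : ∀ a b : Polynomial (ZMod 2), (a + b) ^ q = a ^ q + b ^ q := by
      subst hq; exact fun a b => add_pow_char_pow a b 2 l
    have e1 : (∑ j ∈ range r, (X : Polynomial (ZMod 2)) ^ (q ^ j) + X ^ (q ^ r)) ^ (q + 1)
        = (∑ j ∈ range r, (X : Polynomial (ZMod 2)) ^ (q ^ j)) ^ (q + 1)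
          + ((∑ j ∈ range r, (X : Polynomial (ZMod 2)) ^ (q ^ j)) ^ q * X ^ (q ^ r)
             + ((X : Polynomial (ZMod 2)) ^ (q ^ r)) ^ q *
                 ∑ j ∈ range r, (X : Polynomial (ZMod 2)) ^ (q ^ j)
             + ((X : Polynomial (ZMod 2)) ^ (q ^ r)) ^ (q + 1)) := by
      rw [pow_succ, hfrob, pow_succ, pow_succ]; ring
    have hS1 : (∑ j ∈ range r, (X : Polynomial (ZMod 2)) ^ (q ^ j)) ^ q * X ^ (q ^ r)
        = ∑ j ∈ range r, (X : Polynomial (ZMod 2)) ^ (q ^ (j + 1) + q ^ r) := by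
      rw [hsumq, sum_mul]
      exact sum_congr rfl fun j _ => by ring
    have hT0 : ((X : Polynomial (ZMod 2)) ^ (q ^ r)) ^ q *
          ∑ j ∈ range r, (X : Polynomial (ZMod 2)) ^ (q ^ j)
        = ∑ j ∈ range r, (X : Polynomial (ZMod 2)) ^ (q ^ j + q ^ (r + 1)) := by
      rw [mul_sum]
      exact sum_congr rfl fun j _ => by ring
    have t1 := tele r (fun j => (X : Polynomial (ZMod 2)) ^ (q ^ j + q ^ r))
    have t2 := tele r (fun j => (X : Polynomial (ZMod 2)) ^ (q ^ j + q ^ (r + 1)))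
    have hD2 : (∑ i ∈ range r, ∑ s ∈ range l, (X : Polynomial (ZMod 2)) ^ (2 ^ s * (q ^ i + q ^ r))) ^ 2
          + ∑ i ∈ range r, ∑ s ∈ range l, (X : Polynomial (ZMod 2)) ^ (2 ^ s * (q ^ i + q ^ r))
        = (∑ i ∈ range r, (X : Polynomial (ZMod 2)) ^ (q ^ (i + 1) + q ^ (r + 1)))
          + ∑ i ∈ range r, (X : Polynomial (ZMod 2)) ^ (q ^ i + q ^ r) := by
      rw [sum_pow_char 2, ← Finset.sum_add_distrib, ← Finset.sum_add_distrib]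
      refine sum_congr rfl fun i _ => ?_
      rw [telesq, ← hq]
      ring
    rw [sum_range_succ, sum_range_succ, sum_Ico_succ_top hr]
    linear_combination e1 + IH + hS1 + hT0 - hD2 + t1 - t2 +
      ((X : Polynomial (ZMod 2)) ^ (q ^ r + 1)
        + (∑ j ∈ range r, (X : Polynomial (ZMod 2)) ^ (q ^ j + q ^ (r + 1)))
        - X ^ (q ^ (r + 1) + 1)
        - (∑ j ∈ range r, (X : Polynomial (ZMod 2)) ^ (q ^ j + q ^ r))
        - (((∑ j ∈ Ico 1 r, (X : Polynomial (ZMod 2)) ^ (q ^ j)) +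
              ∑ j ∈ range r, ∑ i ∈ range j, ∑ s ∈ range l, X ^ (2 ^ s * (q ^ i + q ^ j)))
            * (X ^ (q ^ r) +
                ∑ i ∈ range r, ∑ s ∈ range l, (X : Polynomial (ZMod 2)) ^ (2 ^ s * (q ^ i + q ^ r)))
           + X ^ (q ^ r) *
              ∑ i ∈ range r, ∑ s ∈ range l, (X : Polynomial (ZMod 2)) ^ (2 ^ s * (q ^ i + q ^ r)))) * two0

/-- Key polynomial identity behind the morphism `C_k → C_l` (k = l·r):
with `q = 2^l`, `f = Σ_{j<r} X^{q^j}` and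
`g = Σ_{1≤j<r} X^{q^j} + Σ_{0≤i<j≤r-1} Σ_{s<l} X^{2^s(q^i+q^j)}`,
one has `f^{q+1} + f = X^{q^r+1} + X + g^2 + g` in `F_2[X]`. -/
theorem stmt_0 (l r : ℕ) (hl : 1 ≤ l) (hr : 1 ≤ r)
    (q : ℕ) (hq : q = 2 ^ l)
    (f g : Polynomial (ZMod 2))
    (hf : f = ∑ j ∈ range r, X ^ (q ^ j))
    (hg : g = (∑ j ∈ Ico 1 r, X ^ (q ^ j)) +
      ∑ j ∈ range r, ∑ i ∈ range j, ∑ s ∈ range l, X ^ (2 ^ s * (q ^ i + q ^ j))) :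
    f ^ (q + 1) + f = X ^ (q ^ r + 1) + X + g ^ 2 + g := by
  subst hf hg
  exact key l q hq r hr
end

section
/- Let l ≥ 1 and r ≥ 1 be integers and set q = 2^l. In F_2[X], with g(X) = Σ_{j=1}^{r-1} X^{q^j} + Σ_{0 ≤ i < j ≤ r-1} Σ_{s=0}^{l-1} X^{2^s·(q^i + q^j)}, one has g(X)^2 + g(X) = Σ_{j=1}^{r-1} X^{q^j} + Σ_{j=1}^{r-1} X^{2q^j} + Σ_{j=1}^{r-1} X^{1+q^j} + Σ_{i=1}^{r-1} X^{q^i + q^r}. -/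
open Polynomial Finset

lemma aux1 (q r : ℕ) :
    ∑ j ∈ range (r+1), ∑ i ∈ range j,
        ((X : Polynomial (ZMod 2)) ^ (q^(i+1)+q^(j+1)) + X ^ (q^i+q^j)) =
    (∑ j ∈ range r, X ^ (1+q^(j+1))) + ∑ i ∈ range r, X ^ (q^(i+1)+q^(r+1)) := by
  induction r with
  | zero => simp
  | succ r ih =>
    rw [Finset.sum_range_succ (n := r+1), ih, Finset.sum_add_distrib,
      Finset.sum_range_succ (f := fun i => (X : Polynomial (ZMod 2)) ^ (q^(i+1)+q^(r+1+1))),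
      Finset.sum_range_succ' (f := fun i => (X : Polynomial (ZMod 2)) ^ (q^i+q^(r+1))),
      Finset.sum_range_succ (f := fun j => (X : Polynomial (ZMod 2)) ^ (1+q^(j+1)))]
    simp only [pow_zero]
    have h : ∀ x : Polynomial (ZMod 2), x + x = 0 := CharTwo.add_self_eq_zero
    linear_combination h (∑ k ∈ range r, (X:Polynomial (ZMod 2)) ^ (q ^ (k + 1) + q ^ (r + 1)))

/-- With `q = 2^l` and
`g = Σ_{j=1}^{r-1} X^{q^j} + Σ_{0≤i<j≤r-1} Σ_{s=0}^{l-1} X^{2^s(q^i+q^j)}` in `F_2[X]`,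
one has `g^2 + g = Σ_{j=1}^{r-1} X^{q^j} + Σ_{j=1}^{r-1} X^{2q^j}
  + Σ_{j=1}^{r-1} X^{1+q^j} + Σ_{i=1}^{r-1} X^{q^i+q^r}`. -/
theorem stmt_2 (l r : ℕ) (hl : 1 ≤ l) (hr : 1 ≤ r)
    (q : ℕ) (hq : q = 2 ^ l)
    (g : Polynomial (ZMod 2))
    (hg : g = (∑ j ∈ Ico 1 r, X ^ (q ^ j)) +
      ∑ j ∈ range r, ∑ i ∈ range j, ∑ s ∈ range l, X ^ (2 ^ s * (q ^ i + q ^ j))) :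
    g ^ 2 + g =
      (∑ j ∈ Ico 1 r, X ^ (q ^ j)) +
      (∑ j ∈ Ico 1 r, X ^ (2 * q ^ j)) +
      (∑ j ∈ Ico 1 r, X ^ (1 + q ^ j)) +
      (∑ i ∈ Ico 1 r, X ^ (q ^ i + q ^ r)) := by
  obtain ⟨r', rfl⟩ : ∃ r', r = r' + 1 := ⟨r - 1, by omega⟩
  have key : (∑ j ∈ range (r'+1), ∑ i ∈ range j, ∑ s ∈ range l,
        (X:Polynomial (ZMod 2)) ^ (2^s*(q^i+q^j)))^2
      + ∑ j ∈ range (r'+1), ∑ i ∈ range j, ∑ s ∈ range l,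
        (X:Polynomial (ZMod 2)) ^ (2^s*(q^i+q^j))
      = (∑ j ∈ range r', X ^ (1+q^(j+1))) + ∑ i ∈ range r', X ^ (q^(i+1)+q^(r'+1)) := by
    rw [sum_pow_char, ← Finset.sum_add_distrib, ← aux1 q r']
    refine Finset.sum_congr rfl fun j _ => ?_
    rw [sum_pow_char, ← Finset.sum_add_distrib]
    refine Finset.sum_congr rfl fun i _ => ?_
    rw [sum_pow_char]
    have tel := Finset.sum_range_sub (fun s => (X:Polynomial (ZMod 2)) ^ (2^s*(q^i+q^j))) l
    simp only [CharTwo.sub_eq_add] at tel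
    have hsq : ∀ s, ((X:Polynomial (ZMod 2)) ^ (2^s*(q^i+q^j)))^2
        = X ^ (2^(s+1)*(q^i+q^j)) := by
      intro s
      rw [← pow_mul]
      congr 1
      ring
    simp only [hsq]
    rw [← Finset.sum_add_distrib, tel]
    have h1 : 2^l*(q^i+q^j) = q^(i+1)+q^(j+1) := by rw [hq]; ring
    have h2 : 2^0*(q^i+q^j) = q^i+q^j := by ring
    rw [h1, h2]
  have e1 : ∀ f : ℕ → Polynomial (ZMod 2),
      ∑ j ∈ Ico 1 (r'+1), f j = ∑ j ∈ range r', f (j+1) := by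
    intro f
    rw [Finset.sum_Ico_eq_sum_range]
    simp [Nat.add_comm]
  have hA2 : (∑ j ∈ Ico 1 (r'+1), (X:Polynomial (ZMod 2)) ^ (q ^ j))^2
      = ∑ j ∈ Ico 1 (r'+1), (X:Polynomial (ZMod 2)) ^ (2 * q ^ j) := by
    rw [sum_pow_char]
    refine Finset.sum_congr rfl fun j _ => ?_
    rw [← pow_mul]
    congr 1
    ring
  rw [hg, CharTwo.add_sq]
  simp only [e1] at hA2 ⊢
  linear_combination key + hA2
end

section
/- Let k ≥ 1 be an odd integer. Then there is no linearised polynomial B(X) = Σ_{i ≥ 0} a_i X^{2^i} over F_2 (with a_i ∈ F_2, all but finitely many zero) satisfying both B(1) = 0 and B(X)^2 + B(X) = X^{2^k} + X in F_2[X]. -/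
/-!
The polynomial `T = Σ_{j<k} X^{2^j}` solves `T² + T = X^{2^k} + X`, and in characteristic 2
two solutions of `Y² + Y = c` in a domain differ by an idempotent, i.e. by `0` or `1`.
A linearised `B` vanishes at `0`, as `T` does, so `B = T` and `B(1) = T(1) = k = 1` in `F_2`.
-/

open Polynomial Finset

theorem eq_or_eq_add_one_of_sq_add_self_eq {R : Type*} [CommRing R] [IsDomain R] [CharP R 2]
    {x y : R} (h : x ^ 2 + x = y ^ 2 + y) : x = y ∨ x = y + 1 := by
  have hidem : (x - y) ^ 2 = x - y := by
    linear_combination h + (y ^ 2 - x * y - x + y) * CharTwo.two_eq_zero (R := R)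
  rcases eq_zero_or_one_of_sq_eq_self hidem with h0 | h1
  · exact Or.inl (sub_eq_zero.mp h0)
  · exact Or.inr (by linear_combination h1)

theorem sq_add_self_sum_range_pow_two_pow {R : Type*} [CommRing R] [CharP R 2] (x : R) (k : ℕ) :
    (∑ j ∈ range k, x ^ 2 ^ j) ^ 2 + ∑ j ∈ range k, x ^ 2 ^ j = x ^ 2 ^ k + x := by
  induction k with
  | zero => simp [CharTwo.add_self_eq_zero]
  | succ k ih =>
    rw [sum_range_succ, pow_succ 2 k, pow_mul]
    linear_combination ih +
      ((∑ j ∈ range k, x ^ 2 ^ j) + 1) * x ^ 2 ^ k * CharTwo.two_eq_zero (R := R)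

theorem stmt_10_general (k : ℕ) (hodd : Odd k) :
    ¬ ∃ (N : ℕ) (a : ℕ → ZMod 2) (B : Polynomial (ZMod 2)),
      B = (∑ i ∈ range (N + 1), C (a i) * X ^ (2 ^ i)) ∧
      B.eval 1 = 0 ∧
      B ^ 2 + B = X ^ (2 ^ k) + X := by
  rintro ⟨N, a, B, hB, hB1, heq⟩
  set T : (ZMod 2)[X] := ∑ j ∈ range k, X ^ 2 ^ j
  have hB0 : B.eval 0 = 0 := by simp [hB, eval_finsetSum]
  have hT0 : T.eval 0 = 0 := by simp [T, eval_finsetSum]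
  have hT1 : T.eval 1 = 1 := by simpa [T, eval_finsetSum] using hodd.natCast_zmod_two
  have hTeq : T ^ 2 + T = X ^ 2 ^ k + X := sq_add_self_sum_range_pow_two_pow X k
  rcases eq_or_eq_add_one_of_sq_add_self_eq (heq.trans hTeq.symm) with hBT | hBT
  · rw [hBT, hT1] at hB1
    exact one_ne_zero hB1
  · rw [hBT, eval_add, hT0, eval_one, zero_add] at hB0
    exact one_ne_zero hB0

/-- For odd `k ≥ 1`, there is no linearised polynomial
`B = Σ_{i=0}^{N} a_i X^{2^i}` over `F_2` with both `B(1) = 0` and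
`B² + B = X^{2^k} + X` in `F_2[X]`. -/
theorem stmt_10 (k : ℕ) (hk : 1 ≤ k) (hodd : Odd k) :
    ¬ ∃ (N : ℕ) (a : ℕ → ZMod 2) (B : Polynomial (ZMod 2)),
      B = (∑ i ∈ range (N + 1), C (a i) * X ^ (2 ^ i)) ∧
      B.eval 1 = 0 ∧
      B ^ 2 + B = X ^ (2 ^ k) + X :=
  stmt_10_general k hodd
end

section
/- Let p be an odd prime. Then there is no polynomial g(X) ∈ F_p[X] satisfying g(X)^p − g(X) = X^{p^2+p} + X^{2p} + X^{p+1} + X^p. -/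
open Polynomial

/-!
Over `𝔽_q` we have `g ^ q = g(X ^ q)`, so the coefficient of `X ^ n` in `g ^ q - g` is
`g_{n/q} - g_n` if `q ∣ n` and `-g_n` otherwise. If `g ^ q - g = f` with `deg f ≤ q m` and
`q ∤ m`, then `deg g ≤ m`, and comparing the coefficients of `X ^ m` and `X ^ (q m)` gives
`f_{qm} = -f_m`. For `f = X ^ (p ^ 2 + p) + X ^ (2p) + X ^ (p + 1) + X ^ p` and `m = p + 1` both
coefficients are `1`, so `1 = -1` in `𝔽_p`, i.e. `p = 2`.
-/

namespace Polynomial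

theorem natDegree_pow_sub_self {R : Type*} [CommRing R] [NoZeroDivisors R] (g : R[X]) {n : ℕ}
    (hn : 1 < n) : (g ^ n - g).natDegree = n * g.natDegree := by
  rcases Nat.eq_zero_or_pos g.natDegree with hg | hg
  · rw [hg, mul_zero, eq_C_of_natDegree_eq_zero hg, ← C_pow, ← C_sub, natDegree_C]
  · have hlt : g.natDegree < (g ^ n).natDegree := by
      rw [natDegree_pow]
      exact lt_mul_left hg hn
    rw [natDegree_sub_eq_left_of_natDegree_lt hlt, natDegree_pow]

variable {K : Type*} [Field K] [Fintype K]

theorem coeff_pow_card_sub_self_mul (g : K[X]) (n : ℕ) :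
    (g ^ Fintype.card K - g).coeff (Fintype.card K * n) =
      g.coeff n - g.coeff (Fintype.card K * n) := by
  rw [← FiniteField.expand_card, coeff_sub, coeff_expand_mul' Fintype.card_pos]

theorem coeff_pow_card_sub_self_of_not_dvd (g : K[X]) {n : ℕ} (hn : ¬ Fintype.card K ∣ n) :
    (g ^ Fintype.card K - g).coeff n = -g.coeff n := by
  rw [← FiniteField.expand_card, coeff_sub, coeff_expand Fintype.card_pos, if_neg hn, zero_sub]

theorem coeff_card_mul_eq_neg_coeff_of_pow_card_sub_self_eq {g f : K[X]} {m : ℕ}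
    (hgf : g ^ Fintype.card K - g = f) (hf : f.natDegree ≤ Fintype.card K * m)
    (hm : ¬ Fintype.card K ∣ m) : f.coeff (Fintype.card K * m) = -f.coeff m := by
  have hq : 1 < Fintype.card K := Fintype.one_lt_card
  have hm0 : 0 < m := Nat.pos_of_ne_zero (by rintro rfl; exact hm (dvd_zero _))
  have hg_deg : g.natDegree ≤ m := by
    rw [← hgf, natDegree_pow_sub_self g hq] at hf
    exact le_of_mul_le_mul_left hf Fintype.card_pos
  have hg_top : g.coeff (Fintype.card K * m) = 0 :=
    coeff_eq_zero_of_natDegree_lt (hg_deg.trans_lt (lt_mul_left hm0 hq))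
  rw [← hgf, coeff_pow_card_sub_self_mul, hg_top, coeff_pow_card_sub_self_of_not_dvd g hm,
    neg_neg, sub_zero]

end Polynomial

/-- For an odd prime `p`, there is no polynomial `g ∈ F_p[X]` with
`g^p − g = X^{p²+p} + X^{2p} + X^{p+1} + X^p`. -/
theorem stmt_14 (p : ℕ) (hp : p.Prime) (hodd : Odd p) :
    ¬ ∃ g : Polynomial (ZMod p),
      g ^ p - g = X ^ (p ^ 2 + p) + X ^ (2 * p) + X ^ (p + 1) + X ^ p := by
  rintro ⟨g, hg⟩
  have : Fact p.Prime := ⟨hp⟩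
  have hp1 := hp.one_lt
  set f : (ZMod p)[X] := X ^ (p ^ 2 + p) + X ^ (2 * p) + X ^ (p + 1) + X ^ p
  have hf_low : f.coeff (p + 1) = 1 := by
    simp [f, coeff_X_pow, show p + 1 ≠ p ^ 2 + p by nlinarith, show p + 1 ≠ 2 * p by omega]
  have hf_high : f.coeff (p * (p + 1)) = 1 := by
    simp [f, coeff_X_pow, show p * (p + 1) = p ^ 2 + p by ring,
      show p ^ 2 + p ≠ 2 * p by nlinarith, show p ^ 2 + p ≠ p + 1 by nlinarith, hp.ne_zero]
  have hf_deg : f.natDegree ≤ p * (p + 1) := by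
    simp only [f]
    compute_degree
    simp only [max_le_iff]
    refine ⟨?_, ?_, ?_⟩ <;> nlinarith
  have hp_ndvd : ¬ p ∣ p + 1 := (Nat.dvd_add_right dvd_rfl).not.mpr hp.not_dvd_one
  have hcoeff := coeff_card_mul_eq_neg_coeff_of_pow_card_sub_self_eq (g := g) (f := f) (m := p + 1)
    (by rwa [ZMod.card]) (by rwa [ZMod.card]) (by rwa [ZMod.card])
  rw [ZMod.card, hf_high, hf_low] at hcoeff
  have hchar : ringChar (ZMod p) ≠ 2 := by
    rw [ZMod.ringChar_zmod_n]
    rintro rfl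
    exact Nat.not_odd_iff_even.mpr even_two hodd
  exact Ring.neg_one_ne_one_of_char_ne_two hchar hcoeff.symm
end

section
/- Let k ≥ 1 be an integer and let m be a positive odd integer with gcd(k, m) = 1. Then the number of pairs (x, y) ∈ F_{2^m} × F_{2^m} with y^2 + y = x^{2^k+1} + x equals the number of pairs (x, y) ∈ F_{2^m} × F_{2^m} with y^2 + y = x^3 + x. (That is, the curves C_k and C_1 have the same number of affine rational points over F_{2^m}.) -/
/-!
Write `℘ y = y² + y`; in characteristic 2 it is additive, and the point count of
`y² + y = f(x)` only depends on the class of `f` modulo `℘`, up to a permutation of `x`.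
The partial trace `L_k(x) = ∑_{i<k} x^{2^i}` satisfies `℘(L_k x) = x^{2^k} + x`, from which
`L_k(x)³ + L_k(x) ≡ x^{2^k+1} + x`; for odd `k` prime to `m`, `L_k` is injective on `F_{2^m}`,
since its kernel is fixed by the `k`-th and `m`-th powers of Frobenius, hence lies in `F₂`.
For even `k`, the exponent can be replaced by the odd `j = m(k+1) - k`: applying `2^j`-th
powers, which does not change classes modulo `℘`, turns `x^{2^k+1}` into `x^{2^j+1}`.
-/

open Finset

section CharTwo

variable (R : Type*) [CommRing R] [CharP R 2]

def artinSchreier : R →+ R where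
  toFun y := y ^ 2 + y
  map_zero' := by simp
  map_add' a b := by simp only [CharTwo.add_sq]; ring

def artinSchreierClass : R →+ R ⧸ (artinSchreier R).range :=
  QuotientAddGroup.mk' _

def partialTrace (k : ℕ) : R →+ R where
  toFun x := ∑ i ∈ range k, x ^ 2 ^ i
  map_zero' := by simp
  map_add' x y := by simp only [add_pow_char_pow, sum_add_distrib]

variable {R}

lemma artinSchreier_apply (y : R) : artinSchreier R y = y ^ 2 + y := rfl

lemma partialTrace_apply (k : ℕ) (x : R) : partialTrace R k x = ∑ i ∈ range k, x ^ 2 ^ i := rfl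

lemma artinSchreierClass_eq_zero_iff {y : R} :
    artinSchreierClass R y = 0 ↔ ∃ w, artinSchreier R w = y :=
  QuotientAddGroup.eq_zero_iff y

lemma artinSchreierClass_artinSchreier (y : R) :
    artinSchreierClass R (artinSchreier R y) = 0 :=
  artinSchreierClass_eq_zero_iff.2 ⟨y, rfl⟩

lemma artinSchreierClass_add_self (y : R) :
    artinSchreierClass R y + artinSchreierClass R y = 0 := by
  rw [← map_add, CharTwo.add_self_eq_zero, map_zero]

lemma artinSchreierClass_sq (y : R) : artinSchreierClass R (y ^ 2) = artinSchreierClass R y := by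
  have h := artinSchreierClass_artinSchreier y
  rw [artinSchreier_apply, map_add, ← artinSchreierClass_add_self y] at h
  exact add_right_cancel h

lemma artinSchreierClass_pow_two_pow (y : R) (j : ℕ) :
    artinSchreierClass R (y ^ 2 ^ j) = artinSchreierClass R y := by
  induction j with
  | zero => rw [pow_zero, pow_one]
  | succ j ih => rw [pow_succ, pow_mul, artinSchreierClass_sq, ih]

/-- Transporting points along `(x, y) ↦ (e x, y + w x)`, where `g (e x) = f x + ℘ (w x)`. -/
theorem card_curve_eq_of_artinSchreierClass_eq (f g : R → R) (e : R ≃ R)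
    (h : ∀ x, artinSchreierClass R (g (e x)) = artinSchreierClass R (f x)) :
    Nat.card {p : R × R // p.2 ^ 2 + p.2 = f p.1} =
      Nat.card {p : R × R // p.2 ^ 2 + p.2 = g p.1} := by
  have hw : ∀ x, ∃ w, artinSchreier R w = g (e x) - f x := fun x =>
    artinSchreierClass_eq_zero_iff.1 (by rw [map_sub, h, sub_self])
  choose w hw using hw
  refine Nat.card_congr ((e.prodShear fun x => Equiv.addRight (w x)).subtypeEquiv fun p => ?_)
  have hshift := map_add (artinSchreier R) p.2 (w p.1)
  simp only [artinSchreier_apply] at hshift hw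
  simp only [Equiv.prodShear_apply, Equiv.coe_addRight, hshift, hw p.1]
  constructor <;> intro hp <;> linear_combination hp

lemma artinSchreier_partialTrace (k : ℕ) (x : R) :
    artinSchreier R (partialTrace R k x) = x ^ 2 ^ k + x := by
  rw [partialTrace_apply, map_sum]
  calc ∑ i ∈ range k, artinSchreier R (x ^ 2 ^ i)
      = ∑ i ∈ range k, (x ^ 2 ^ (i + 1) - x ^ 2 ^ i) := sum_congr rfl fun i _ => by
        rw [artinSchreier_apply, CharTwo.sub_eq_add, pow_succ 2 i, pow_mul]
    _ = x ^ 2 ^ k + x := by rw [sum_range_sub (fun i => x ^ 2 ^ i), pow_zero, pow_one, CharTwo.sub_eq_add]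

lemma sum_range_reflect_sub_sum_range {G : Type*} [AddCommGroup G] (f : ℕ → G) (k : ℕ) :
    ∑ i ∈ range k, f (k - i) - ∑ i ∈ range k, f i = f k - f 0 := by
  rw [← sum_range_sub, sum_sub_distrib, ← sum_range_reflect (fun i => f (i + 1))]
  congr 1
  refine sum_congr rfl fun i hi => ?_
  rw [show k - 1 - i + 1 = k - i by have := mem_range.1 hi; omega]

theorem artinSchreierClass_partialTrace_cube (k : ℕ) (x : R) :
    artinSchreierClass R (partialTrace R k x ^ 3 + partialTrace R k x) =
      artinSchreierClass R (x ^ (2 ^ k + 1) + x) := by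
  set L := partialTrace R k x with hLdef
  have hL : L ^ 2 + L = x ^ 2 ^ k + x := artinSchreier_partialTrace k x
  have hcube : L ^ 3 + L = (x ^ 2 ^ k + x) * L + (x ^ 2 ^ k + x) := by
    linear_combination (L + 1) * hL - L ^ 2 * CharTwo.two_eq_zero (R := R)
  have hexpand : (x ^ 2 ^ k + x) * L = ∑ i ∈ range k, x ^ (2 ^ k + 2 ^ i) +
      ∑ i ∈ range k, x ^ (2 ^ i + 1) := by
    rw [hLdef, partialTrace_apply, mul_sum, ← sum_add_distrib]
    exact sum_congr rfl fun i _ => by ring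
  -- `x^{2^k + 2^i}` is the `2^i`-th power of `x^{2^{k-i} + 1}`
  have htwist : artinSchreierClass R (∑ i ∈ range k, x ^ (2 ^ k + 2 ^ i)) =
      artinSchreierClass R (∑ i ∈ range k, x ^ (2 ^ (k - i) + 1)) := by
    simp only [map_sum]
    refine sum_congr rfl fun i hi => ?_
    rw [← artinSchreierClass_pow_two_pow (x ^ (2 ^ (k - i) + 1)) i, ← pow_mul, add_mul, one_mul, ← pow_add,
      Nat.sub_add_cancel (mem_range.1 hi).le]
  have htelescope : ∑ i ∈ range k, x ^ (2 ^ (k - i) + 1) + ∑ i ∈ range k, x ^ (2 ^ i + 1) =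
      x ^ (2 ^ k + 1) + x ^ 2 := by
    have h := sum_range_reflect_sub_sum_range (fun i => x ^ (2 ^ i + 1)) k
    rwa [CharTwo.sub_eq_add, CharTwo.sub_eq_add, pow_zero] at h
  rw [hcube, hexpand, map_add, map_add, htwist, ← map_add, htelescope, map_add, map_add,
    map_add, artinSchreierClass_sq, artinSchreierClass_pow_two_pow, artinSchreierClass_add_self,
    add_zero]

lemma artinSchreierClass_pow_two_pow_add_one {m k j : ℕ} (hR : ∀ x : R, x ^ 2 ^ m = x)
    (hkj : m ∣ k + j) (x : R) :
    artinSchreierClass R (x ^ (2 ^ k + 1)) = artinSchreierClass R (x ^ (2 ^ j + 1)) := by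
  obtain ⟨t, ht⟩ := hkj
  have hperiod : Function.IsPeriodicPt (· ^ 2) (m * t) x :=
    Function.IsPeriodicPt.mul_const (by simp [Function.IsPeriodicPt, Function.IsFixedPt,
      pow_iterate, hR]) t
  have hfix : x ^ 2 ^ (k + j) = x := by
    simpa [ht, Function.IsPeriodicPt, Function.IsFixedPt, pow_iterate] using hperiod
  rw [← artinSchreierClass_pow_two_pow _ j, ← pow_mul, add_mul, one_mul, ← pow_add, pow_add,
    hfix, pow_succ']

theorem card_curve_eq_of_dvd_add {m k j : ℕ} (hR : ∀ x : R, x ^ 2 ^ m = x) (hkj : m ∣ k + j) :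
    Nat.card {p : R × R // p.2 ^ 2 + p.2 = p.1 ^ (2 ^ k + 1) + p.1} =
      Nat.card {p : R × R // p.2 ^ 2 + p.2 = p.1 ^ (2 ^ j + 1) + p.1} :=
  card_curve_eq_of_artinSchreierClass_eq (fun x => x ^ (2 ^ k + 1) + x)
    (fun x => x ^ (2 ^ j + 1) + x) (Equiv.refl R) fun x => by
    simp only [Equiv.refl_apply, map_add, artinSchreierClass_pow_two_pow_add_one hR hkj x]

end CharTwo

section Field

variable {F : Type*} [Field F] [CharP F 2]

theorem partialTrace_injective {m k : ℕ} (hF : ∀ x : F, x ^ 2 ^ m = x) (hk : Odd k)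
    (hkm : Nat.Coprime k m) : Function.Injective (partialTrace F k) := by
  refine (injective_iff_map_eq_zero _).2 fun z hz => ?_
  have hzk : z ^ 2 ^ k = z := by
    rw [← CharTwo.add_eq_zero, ← artinSchreier_partialTrace, hz, map_zero]
  have hperiod : Function.IsPeriodicPt (· ^ 2) (k.gcd m) z :=
    Function.IsPeriodicPt.gcd (by simpa [Function.IsPeriodicPt, Function.IsFixedPt, pow_iterate])
      (by simp [Function.IsPeriodicPt, Function.IsFixedPt, pow_iterate, hF])
  have hidem : IsIdempotentElem z := by
    simpa [hkm, Function.IsPeriodicPt, Function.IsFixedPt, IsIdempotentElem, sq] using hperiod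
  refine (IsIdempotentElem.iff_eq_zero_or_one.1 hidem).resolve_right fun h1 => ?_
  rw [h1, partialTrace_apply] at hz
  simp [CharTwo.natCast_eq_ite, Nat.not_even_iff_odd.2 hk] at hz

theorem card_curve_eq_cube_of_odd [Finite F] {m k : ℕ} (hF : ∀ x : F, x ^ 2 ^ m = x)
    (hk : Odd k) (hkm : Nat.Coprime k m) :
    Nat.card {p : F × F // p.2 ^ 2 + p.2 = p.1 ^ (2 ^ k + 1) + p.1} =
      Nat.card {p : F × F // p.2 ^ 2 + p.2 = p.1 ^ 3 + p.1} :=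
  card_curve_eq_of_artinSchreierClass_eq (fun x => x ^ (2 ^ k + 1) + x) (fun x => x ^ 3 + x)
    (Equiv.ofBijective _ (Finite.injective_iff_bijective.1 (partialTrace_injective hF hk hkm)))
    (artinSchreierClass_partialTrace_cube k)

end Field

lemma GaloisField.pow_two_pow_eq_self {m : ℕ} (hm : m ≠ 0) (x : GaloisField 2 m) :
    x ^ 2 ^ m = x := by
  have := Fintype.ofFinite (GaloisField 2 m)
  rw [← GaloisField.card 2 m hm, Nat.card_eq_fintype_card, FiniteField.pow_card]

theorem stmt_16_general (k m : ℕ) (hodd : Odd m)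
    (hgcd : Nat.gcd k m = 1) :
    Nat.card {p : GaloisField 2 m × GaloisField 2 m //
        p.2 ^ 2 + p.2 = p.1 ^ (2 ^ k + 1) + p.1} =
      Nat.card {p : GaloisField 2 m × GaloisField 2 m //
        p.2 ^ 2 + p.2 = p.1 ^ 3 + p.1} := by
  have hF := GaloisField.pow_two_pow_eq_self hodd.pos.ne'
  rcases Nat.even_or_odd k with hk | hk
  · have hkj : k ≤ m * (k + 1) := by nlinarith [hodd.pos]
    have hj : Odd (m * (k + 1) - k) := Nat.Odd.sub_even hkj (hodd.mul hk.add_one) hk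
    have hjm : Nat.Coprime (m * (k + 1) - k) m := by
      rw [← Nat.isCoprime_iff_coprime, Nat.cast_sub hkj, sub_eq_neg_add]
      push_cast
      exact (Nat.isCoprime_iff_coprime.2 hgcd).neg_left.add_mul_left_left _
    rw [card_curve_eq_of_dvd_add hF (j := m * (k + 1) - k) ⟨k + 1, by omega⟩]
    exact card_curve_eq_cube_of_odd hF hj hjm
  · exact card_curve_eq_cube_of_odd hF hk hgcd

/-- For `k ≥ 1` and `m` a positive odd integer with `gcd(k, m) = 1`, the
curves `C_k : y² + y = x^{2^k+1} + x` and `C_1 : y² + y = x³ + x` have the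
same number of affine rational points over `F_{2^m}`. -/
theorem stmt_16 (k m : ℕ) (hk : 1 ≤ k) (hm : 0 < m) (hodd : Odd m)
    (hgcd : Nat.gcd k m = 1) :
    Nat.card {p : GaloisField 2 m × GaloisField 2 m //
        p.2 ^ 2 + p.2 = p.1 ^ (2 ^ k + 1) + p.1} =
      Nat.card {p : GaloisField 2 m × GaloisField 2 m //
        p.2 ^ 2 + p.2 = p.1 ^ 3 + p.1} :=
  stmt_16_general k m hodd hgcd
end
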